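/- arXiv:1003.0108 — 2 statements merged into one kernel-verified Lean document; each statement's English description precedes it below -/
import Mathlib

section
/- Let P, C be matrices over the field of fractions of a commutative integral domain R with normalized coprime factorizations P = NM⁻¹ and C = M̃_c⁻¹Ñ_c. Then the closed-loop transfer matrix H(P,C) = [P; I](I−CP)⁻¹[−C I] equals G(K̃G)⁻¹K̃, where G = [N; M] and K̃ = [−Ñ_c M̃_c], assuming I − CP and K̃G are invertible. -/
/-! Write `G = [N; M]` and `K̃ = [−Ñ_c M̃_c]`. Since `[P; I] = G M⁻¹` and `[−C I] = M̃_c⁻¹ K̃`, the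
closed-loop matrix is `G M⁻¹ (I − CP)⁻¹ M̃_c⁻¹ K̃`, and `K̃ G = M̃_c (I − CP) M` turns the middle
factor into `(K̃ G)⁻¹`. -/

namespace Matrix

variable {K : Type*} [CommRing K] {p m : Type*} [Fintype m] [DecidableEq m]

theorem fromRows_one_eq_mul_inv {N : Matrix p m K} {M : Matrix m m K} (hM : IsUnit M.det) :
    fromRows (N * M⁻¹) 1 = fromRows N M * M⁻¹ := by
  rw [fromRows_mul, mul_nonsing_inv M hM]

theorem fromCols_neg_one_eq_inv_mul {Nc : Matrix m p K} {Mc : Matrix m m K} (hMc : IsUnit Mc.det) :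
    fromCols (-(Mc⁻¹ * Nc)) 1 = Mc⁻¹ * fromCols (-Nc) Mc := by
  rw [mul_fromCols, Matrix.mul_neg, nonsing_inv_mul Mc hMc]

theorem fromCols_mul_fromRows_eq_mul_one_sub_mul [Fintype p] {N : Matrix p m K} {M : Matrix m m K}
    {Nc : Matrix m p K} {Mc : Matrix m m K} (hM : IsUnit M.det) (hMc : IsUnit Mc.det) :
    fromCols (-Nc) Mc * fromRows N M = Mc * (1 - Mc⁻¹ * Nc * (N * M⁻¹)) * M := by
  have hMcC : Mc * (Mc⁻¹ * Nc) = Nc := by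
    rw [← Matrix.mul_assoc, mul_nonsing_inv Mc hMc, Matrix.one_mul]
  have hPM : N * M⁻¹ * M = N := by rw [Matrix.mul_assoc, nonsing_inv_mul M hM, Matrix.mul_one]
  have hCP : Mc * (Mc⁻¹ * Nc * (N * M⁻¹)) * M = Nc * N := by
    rw [show Mc * (Mc⁻¹ * Nc * (N * M⁻¹)) * M = Mc * (Mc⁻¹ * Nc) * (N * M⁻¹ * M) by
      simp only [Matrix.mul_assoc], hMcC, hPM]
  rw [fromCols_mul_fromRows, Matrix.mul_sub, Matrix.mul_one, Matrix.sub_mul, hCP, Matrix.neg_mul,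
    neg_add_eq_sub]

theorem fromRows_mul_inv_one_sub_mul_fromCols [Fintype p] {N : Matrix p m K} {M : Matrix m m K}
    {Nc : Matrix m p K} {Mc : Matrix m m K} (hM : IsUnit M.det) (hMc : IsUnit Mc.det) :
    fromRows (N * M⁻¹) 1 * (1 - Mc⁻¹ * Nc * (N * M⁻¹))⁻¹ * fromCols (-(Mc⁻¹ * Nc)) 1 =
      fromRows N M * (fromCols (-Nc) Mc * fromRows N M)⁻¹ * fromCols (-Nc) Mc := by
  rw [fromRows_one_eq_mul_inv hM, fromCols_neg_one_eq_inv_mul hMc,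
    fromCols_mul_fromRows_eq_mul_one_sub_mul hM hMc, Matrix.mul_inv_rev, Matrix.mul_inv_rev]
  simp only [Matrix.mul_assoc]

end Matrix

open Matrix in
theorem closed_loop_formula_general
    {R : Type*} [CommRing R] {p m : ℕ}
    (N : Matrix (Fin p) (Fin m) R) (M : Matrix (Fin m) (Fin m) R)
    (Nc : Matrix (Fin m) (Fin p) R) (Mc : Matrix (Fin m) (Fin m) R)
    (P : Matrix (Fin p) (Fin m) (FractionRing R))
    (C : Matrix (Fin m) (Fin p) (FractionRing R))
    (hM : IsUnit (M.map (algebraMap R (FractionRing R))))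
    (hMc : IsUnit (Mc.map (algebraMap R (FractionRing R))))
    (hP : P = N.map (algebraMap R (FractionRing R)) *
      (M.map (algebraMap R (FractionRing R)))⁻¹)
    (hC : C = (Mc.map (algebraMap R (FractionRing R)))⁻¹ *
      Nc.map (algebraMap R (FractionRing R))) :
    Matrix.fromRows P (1 : Matrix (Fin m) (Fin m) (FractionRing R)) *
        (1 - C * P)⁻¹ * Matrix.fromCols (-C) 1 =
      Matrix.fromRows (N.map (algebraMap R (FractionRing R)))
          (M.map (algebraMap R (FractionRing R))) *
        (Matrix.fromCols (-(Nc.map (algebraMap R (FractionRing R))))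
            (Mc.map (algebraMap R (FractionRing R))) *
          Matrix.fromRows (N.map (algebraMap R (FractionRing R)))
            (M.map (algebraMap R (FractionRing R))))⁻¹ *
        Matrix.fromCols (-(Nc.map (algebraMap R (FractionRing R))))
          (Mc.map (algebraMap R (FractionRing R))) := by
  subst hP hC
  exact fromRows_mul_inv_one_sub_mul_fromCols ((isUnit_iff_isUnit_det _).mp hM)
    ((isUnit_iff_isUnit_det _).mp hMc)

open Matrix in
/-- The closed-loop transfer matrix `H(P,C) = [P; I](I−CP)⁻¹[−C I]` equals
`G (K̃ G)⁻¹ K̃` where `G = [N; M]` and `K̃ = [−Ñ_c M̃_c]`, for a plant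
`P = N M⁻¹` and a controller `C = M̃_c⁻¹ Ñ_c` with matrices over a commutative
integral domain `R`, viewed over its field of fractions. -/
theorem closed_loop_formula
    {R : Type*} [CommRing R] [IsDomain R] {p m : ℕ}
    (N : Matrix (Fin p) (Fin m) R) (M : Matrix (Fin m) (Fin m) R)
    (Nc : Matrix (Fin m) (Fin p) R) (Mc : Matrix (Fin m) (Fin m) R)
    (P : Matrix (Fin p) (Fin m) (FractionRing R))
    (C : Matrix (Fin m) (Fin p) (FractionRing R))
    (hM : IsUnit (M.map (algebraMap R (FractionRing R))))
    (hMc : IsUnit (Mc.map (algebraMap R (FractionRing R))))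
    (hP : P = N.map (algebraMap R (FractionRing R)) *
      (M.map (algebraMap R (FractionRing R)))⁻¹)
    (hC : C = (Mc.map (algebraMap R (FractionRing R)))⁻¹ *
      Nc.map (algebraMap R (FractionRing R)))
    (h1 : IsUnit (1 - C * P))
    (h2 : IsUnit (Matrix.fromCols (-(Nc.map (algebraMap R (FractionRing R))))
        (Mc.map (algebraMap R (FractionRing R))) *
      Matrix.fromRows (N.map (algebraMap R (FractionRing R)))
        (M.map (algebraMap R (FractionRing R))))) :
    Matrix.fromRows P (1 : Matrix (Fin m) (Fin m) (FractionRing R)) *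
        (1 - C * P)⁻¹ * Matrix.fromCols (-C) 1 =
      Matrix.fromRows (N.map (algebraMap R (FractionRing R)))
          (M.map (algebraMap R (FractionRing R))) *
        (Matrix.fromCols (-(Nc.map (algebraMap R (FractionRing R))))
            (Mc.map (algebraMap R (FractionRing R))) *
          Matrix.fromRows (N.map (algebraMap R (FractionRing R)))
            (M.map (algebraMap R (FractionRing R))))⁻¹ *
        Matrix.fromCols (-(Nc.map (algebraMap R (FractionRing R))))
          (Mc.map (algebraMap R (FractionRing R))) :=
  closed_loop_formula_general N M Nc Mc P C hM hMc hP hC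
end

section
/- Suppose G ∈ ℂ^{(p+m)×m} satisfies G*G = I_m and K̃ ∈ ℂ^{m×(p+m)} satisfies K̃K̃* = I_m, and K̃G is invertible. Then the operator norm of G(K̃G)⁻¹K̃ equals 1/σ̲(K̃G), where σ̲ denotes the smallest singular value. -/
/-!
`sigmaMax` is the supremum of `‖M x‖` over the unit sphere, i.e. the L2 operator norm. By the
C⋆-identity `‖Xᴴ X‖ = ‖X‖²`, that norm is unchanged by multiplying with an isometry on the left or
a coisometry on the right, so the left side is `‖(K̃ G)⁻¹‖`. For an invertible operator `A`,
`inf_{‖x‖ = 1} ‖A x‖ = ‖A⁻¹‖⁻¹`, which is the right side.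
-/

/-- The largest singular value of a complex matrix: the operator norm of the induced
map between Euclidean spaces, i.e. the sup of `‖M x‖` over unit vectors `x`. -/
noncomputable def sigmaMax {n m : Type*} [Fintype n] [Fintype m] [DecidableEq m]
    (M : Matrix n m ℂ) : ℝ :=
  sSup {r : ℝ | ∃ x : EuclideanSpace ℂ m, ‖x‖ = 1 ∧ r = ‖Matrix.toEuclideanLin M x‖}

/-- The smallest singular value of a complex matrix: the inf of `‖M x‖` over unit
vectors `x` (equivalently, the square root of the smallest eigenvalue of `Mᴴ M`). -/
noncomputable def sigmaMin {n m : Type*} [Fintype n] [Fintype m] [DecidableEq m]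
    (M : Matrix n m ℂ) : ℝ :=
  sInf {r : ℝ | ∃ x : EuclideanSpace ℂ m, ‖x‖ = 1 ∧ r = ‖Matrix.toEuclideanLin M x‖}

open Metric

namespace ContinuousLinearEquiv

variable {𝕜 E F : Type*} [RCLike 𝕜] [NormedAddCommGroup E] [NormedSpace 𝕜 E]
  [NormedAddCommGroup F] [NormedSpace 𝕜 F]

theorem sInf_sphere_eq_inv_norm_symm (e : E ≃L[𝕜] F) :
    sInf ((fun x => ‖e x‖) '' sphere 0 1) = ‖(e.symm : F →L[𝕜] E)‖⁻¹ := by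
  cases subsingleton_or_nontrivial E
  · -- the sphere is empty, `sInf ∅ = 0`, and the only operator into `E` is `0`
    simp [sphere_eq_empty_of_subsingleton one_ne_zero, Subsingleton.elim (e.symm : F →L[𝕜] E) 0]
  set s : F →L[𝕜] E := ↑e.symm
  have hs : 0 < ‖s‖ := by
    obtain ⟨x, hx⟩ := exists_ne (0 : E)
    refine norm_pos_iff.mpr fun h => hx ?_
    simpa [s] using congr($h (e x))
  let : NormedSpace ℝ E := NormedSpace.restrictScalars ℝ 𝕜 E
  refine csInf_eq_of_forall_ge_of_forall_gt_exists_lt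
    ((NormedSpace.sphere_nonempty.mpr zero_le_one).image _) ?_ fun c hc => ?_
  · rintro - ⟨x, hx, rfl⟩
    rw [inv_le_iff_one_le_mul₀' hs]
    simpa [s, mem_sphere_zero_iff_norm.mp hx] using s.le_opNorm (e x)
  · have hc₀ : 0 < c := (inv_pos.mpr hs).trans hc
    obtain ⟨y, hy, hlt⟩ := s.exists_lt_apply_of_lt_opNorm (inv_lt_of_inv_lt₀ hs hc)
    have hsy : 0 < ‖s y‖ := (inv_pos.mpr hc₀).trans hlt
    refine ⟨_, ⟨(‖s y‖⁻¹ : 𝕜) • s y, ?_, rfl⟩, ?_⟩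
    · simp [norm_smul, hsy.ne']
    · calc ‖e ((‖s y‖⁻¹ : 𝕜) • s y)‖ = ‖s y‖⁻¹ * ‖y‖ := by simp [s, norm_smul]
        _ ≤ ‖s y‖⁻¹ := mul_le_of_le_one_right (inv_nonneg.mpr hsy.le) hy.le
        _ < c := inv_lt_of_inv_lt₀ hc₀ hlt

end ContinuousLinearEquiv

open scoped Matrix.Norms.L2Operator

namespace Matrix

variable {𝕜 l m n : Type*} [RCLike 𝕜] [Fintype l] [Fintype m] [Fintype n]
  [DecidableEq l] [DecidableEq n]

theorem l2_opNorm_isometry_mul {G : Matrix m n 𝕜} (hG : Gᴴ * G = 1) (X : Matrix n l 𝕜) :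
    ‖G * X‖ = ‖X‖ := by
  refine (mul_self_inj (norm_nonneg _) (norm_nonneg _)).mp ?_
  rw [← l2_opNorm_conjTranspose_mul_self, ← l2_opNorm_conjTranspose_mul_self, conjTranspose_mul,
    Matrix.mul_assoc, ← Matrix.mul_assoc Gᴴ, hG, Matrix.one_mul]

theorem l2_opNorm_mul_coisometry [DecidableEq m] {K : Matrix n m 𝕜} (hK : K * Kᴴ = 1)
    (X : Matrix l n 𝕜) :
    ‖X * K‖ = ‖X‖ := by
  rw [← l2_opNorm_conjTranspose, conjTranspose_mul,
    l2_opNorm_isometry_mul (by rwa [conjTranspose_conjTranspose]), l2_opNorm_conjTranspose]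

theorem setOf_norm_toEuclideanLin_sphere (M : Matrix m n ℂ) :
    {r : ℝ | ∃ x : EuclideanSpace ℂ n, ‖x‖ = 1 ∧ r = ‖toEuclideanLin M x‖} =
      (fun x => ‖toEuclideanLin M x‖) '' sphere 0 1 := by
  ext r
  simp [eq_comm]

theorem sigmaMax_eq_l2_opNorm (M : Matrix m n ℂ) : sigmaMax M = ‖M‖ := by
  rw [sigmaMax, setOf_norm_toEuclideanLin_sphere, l2_opNorm_def,
    ← ContinuousLinearMap.sSup_sphere_eq_norm]
  rfl

theorem sigmaMin_eq_inv_l2_opNorm_inv {A : Matrix n n ℂ} (hA : IsUnit A) :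
    sigmaMin A = ‖A⁻¹‖⁻¹ := by
  have hdet := A.isUnit_iff_isUnit_det.mp hA
  let e := ContinuousLinearEquiv.equivOfInverse' (toEuclideanCLM (𝕜 := ℂ) A)
    (toEuclideanCLM (𝕜 := ℂ) A⁻¹)
    (by rw [← ContinuousLinearMap.mul_def, ← map_mul, mul_nonsing_inv A hdet, map_one,
      ContinuousLinearMap.one_def])
    (by rw [← ContinuousLinearMap.mul_def, ← map_mul, nonsing_inv_mul A hdet, map_one,
      ContinuousLinearMap.one_def])
  rw [sigmaMin, setOf_norm_toEuclideanLin_sphere, ← l2_opNorm_toEuclideanCLM]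
  exact e.sInf_sphere_eq_inv_norm_symm

end Matrix

open Matrix in
theorem sigmaMax_closed_loop {p m : ℕ}
    (G : Matrix (Fin (p + m)) (Fin m) ℂ) (Kt : Matrix (Fin m) (Fin (p + m)) ℂ)
    (hG : Gᴴ * G = 1) (hK : Kt * Ktᴴ = 1) (hKG : IsUnit (Kt * G)) :
    sigmaMax (G * (Kt * G)⁻¹ * Kt) = 1 / sigmaMin (Kt * G) := by
  rw [sigmaMax_eq_l2_opNorm, l2_opNorm_mul_coisometry hK, l2_opNorm_isometry_mul hG,
    sigmaMin_eq_inv_l2_opNorm_inv hKG, one_div, inv_inv]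
end
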